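/- Let A be a real m×n matrix such that A·Aᵀ is invertible, and set Ã = (A·Aᵀ)⁻¹. Let x, p ∈ ℝⁿ, b = A·x, and assume the scalar D = ⟪p, p⟫ - ⟪A·p, Ã·(A·p)⟫ is nonzero. Define α = (⟪x, p⟫ - ⟪A·p, Ã·b⟫)/D, u = Ã·(b - α·(A·p)) ∈ ℝᵐ, and q = α·p + Aᵀ·u. Then A·(x - q) = 0 and ⟪x - q, p⟫ = 0; consequently q is the orthogonal projection of x onto the subspace of ℝⁿ spanned by p together with the rows of A. -/

import Mathlib

open scoped RealInnerProductSpace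
open Matrix

/-! Because `A Aᵀ Ã = 1`, `A q = α A p + (b - α A p) = b`, so `x - q` is orthogonal to every row
of `A`. Expanding, `⟪x - q, p⟫ = (⟪x, p⟫ - ⟪A p, Ã b⟫) - α D`, which vanishes by the choice of `α`.
Thus `x - q` is orthogonal to `span{p} ⊔ ran(Aᵀ)`, a subspace that contains `q = α p + Aᵀ u`. -/

namespace Matrix

variable {ι κ : Type*}

def euclideanRowSpace (A : Matrix κ ι ℝ) : Submodule ℝ (EuclideanSpace ℝ ι) :=
  Submodule.span ℝ (Set.range fun i => WithLp.toLp 2 (A i))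

theorem toLp_transpose_mulVec_mem_euclideanRowSpace [Fintype κ] (A : Matrix κ ι ℝ) (u : κ → ℝ) :
    WithLp.toLp 2 (Aᵀ *ᵥ u) ∈ A.euclideanRowSpace := by
  rw [mulVec_transpose, vecMul_eq_sum, WithLp.toLp_sum]
  exact Submodule.sum_mem _ fun i _ => Submodule.smul_mem _ _ (Submodule.subset_span ⟨i, rfl⟩)

theorem mem_euclideanRowSpace_orthogonal_iff [Fintype ι] (A : Matrix κ ι ℝ)
    (v : EuclideanSpace ℝ ι) : v ∈ A.euclideanRowSpaceᗮ ↔ A *ᵥ v.ofLp = 0 := by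
  rw [← Submodule.span_singleton_le_iff_mem, ← Submodule.isOrtho_iff_le, euclideanRowSpace,
    Submodule.isOrtho_span]
  simp [funext_iff, EuclideanSpace.inner_eq_star_dotProduct, mulVec]

theorem inner_toLp_transpose_mulVec [Fintype ι] [Fintype κ] (A : Matrix κ ι ℝ) (u : κ → ℝ)
    (p : EuclideanSpace ℝ ι) :
    ⟪WithLp.toLp 2 (Aᵀ *ᵥ u), p⟫ = ⟪WithLp.toLp 2 u, WithLp.toLp 2 (A *ᵥ p.ofLp)⟫ := by
  simp only [EuclideanSpace.inner_eq_star_dotProduct, star_trivial, mulVec_transpose,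
    dotProduct_mulVec, dotProduct_comm]

theorem mulVec_transpose_mulVec_inv_mulVec [Fintype ι] [Fintype κ] [DecidableEq κ]
    (A : Matrix κ ι ℝ) (hA : IsUnit (A * Aᵀ)) (v : κ → ℝ) :
    A *ᵥ (Aᵀ *ᵥ ((A * Aᵀ)⁻¹ *ᵥ v)) = v := by
  rw [mulVec_mulVec, mulVec_mulVec, mul_nonsing_inv _ ((isUnit_iff_isUnit_det _).mp hA),
    one_mulVec]

end Matrix

theorem ap_step_is_projection {m n : ℕ}
    (A : Matrix (Fin m) (Fin n) ℝ) (hinv : IsUnit (A * Aᵀ))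
    (Atil : Matrix (Fin m) (Fin m) ℝ) (hAtil : Atil = (A * Aᵀ)⁻¹)
    (x p : EuclideanSpace ℝ (Fin n))
    (b : EuclideanSpace ℝ (Fin m)) (hb : b = A.mulVec x)
    (Ap : EuclideanSpace ℝ (Fin m)) (hAp : Ap = A.mulVec p)
    (D : ℝ) (hD : D = ⟪p, p⟫ - ⟪Ap, (WithLp.toLp 2 (Atil.mulVec Ap) : EuclideanSpace ℝ (Fin m))⟫)
    (hDne : D ≠ 0)
    (α : ℝ) (hα : α = (⟪x, p⟫ - ⟪Ap, (WithLp.toLp 2 (Atil.mulVec b) : EuclideanSpace ℝ (Fin m))⟫) / D)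
    (u : EuclideanSpace ℝ (Fin m)) (hu : u = Atil.mulVec (b - α • Ap))
    (Atu : EuclideanSpace ℝ (Fin n)) (hAtu : Atu = Aᵀ.mulVec u)
    (q : EuclideanSpace ℝ (Fin n)) (hq : q = α • p + Atu) :
    A.mulVec (x - q) = 0 ∧ ⟪x - q, p⟫ = 0 ∧
      (q ∈ Submodule.span ℝ {p} ⊔
          Submodule.span ℝ (Set.range fun i : Fin m => (WithLp.toLp 2 (A i) : EuclideanSpace ℝ (Fin n))) ∧
        ∀ w ∈ Submodule.span ℝ {p} ⊔
            Submodule.span ℝ (Set.range fun i : Fin m => (WithLp.toLp 2 (A i) : EuclideanSpace ℝ (Fin n))),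
          ⟪x - q, w⟫ = 0) := by
  replace hAtu : Atu = WithLp.toLp 2 (Aᵀ *ᵥ u.ofLp) := congrArg (WithLp.toLp 2) hAtu
  have hu' : u = WithLp.toLp 2 (Atil *ᵥ b.ofLp) - α • WithLp.toLp 2 (Atil *ᵥ Ap.ofLp) := by
    rw [← WithLp.toLp_smul, ← WithLp.toLp_sub, ← mulVec_smul, ← mulVec_sub, ← hu]
  have hAq : A *ᵥ q.ofLp = b.ofLp := by
    rw [hq, hAtu, WithLp.ofLp_add, WithLp.ofLp_smul, WithLp.ofLp_toLp, mulVec_add, mulVec_smul,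
      ← hAp, hu, hAtil, A.mulVec_transpose_mulVec_inv_mulVec hinv, add_sub_cancel]
  have hker : A *ᵥ (x - q).ofLp = 0 := by
    rw [WithLp.ofLp_sub, mulVec_sub, hAq, hb, sub_self]
  have hp : ⟪x - q, p⟫ = 0 := by
    have hαD : α * D = ⟪x, p⟫ - ⟪Ap, WithLp.toLp 2 (Atil *ᵥ b.ofLp)⟫ := by
      rw [hα, div_mul_cancel₀ _ hDne]
    rw [hq, hAtu, inner_sub_left, inner_add_left, real_inner_smul_left,
      inner_toLp_transpose_mulVec, ← hAp, WithLp.toLp_ofLp, WithLp.toLp_ofLp, real_inner_comm Ap,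
      hu', inner_sub_right, real_inner_smul_right]
    linear_combination α * hD - hαD
  refine ⟨hker, hp, ?_, fun w hw => ?_⟩
  · rw [hq, hAtu]
    exact Submodule.add_mem _
      (Submodule.mem_sup_left (Submodule.smul_mem _ _ (Submodule.mem_span_singleton_self p)))
      (Submodule.mem_sup_right (A.toLp_transpose_mulVec_mem_euclideanRowSpace _))
  · have hperp : x - q ∈ (Submodule.span ℝ {p} ⊔ A.euclideanRowSpace)ᗮ := by
      rw [← Submodule.inf_orthogonal]
      exact ⟨Submodule.mem_orthogonal_singleton_iff_inner_left.2 hp,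
        (A.mem_euclideanRowSpace_orthogonal_iff _).2 hker⟩
    exact Submodule.inner_left_of_mem_orthogonal hw hperp
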